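/- arXiv:2605.19502 — 2 statements merged into one kernel-verified Lean document; each statement's English description precedes it below -/
import Mathlib

section
/- Let X be a finite set of pairwise distinct elements of a field of characteristic ≠ 2 with |X| = 2h, and let A_X be the matrix indexed by X with zero diagonal and (x,y) entry 1/(x-y) for x ≠ y. Then per A_X = (-1)^h · Σ_{matchings m of X} Π_{{x,y} ∈ m} 1/(x-y)^2, where the sum is over perfect matchings of X. -/
open scoped Classical

/-- The permanent of a square matrix. -/
noncomputable def permanent {n : Type*} [Fintype n] {R : Type*} [CommRing R]
    (M : Matrix n n R) : R :=
  ∑ σ : Equiv.Perm n, ∏ i, M i (σ i)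

/-- `P` is a perfect matching of the finite set `X`: a set of non-loop unordered pairs with
endpoints in `X` such that each element of `X` lies in exactly one pair. -/
def IsPerfectMatching {K : Type*} (X : Finset K) (P : Finset (Sym2 K)) : Prop :=
  (∀ e ∈ P, ¬ e.IsDiag) ∧ ∀ a ∈ X, ∃! e, e ∈ P ∧ a ∈ e

/-!
Fix `z ∈ S` and write each permutation of `S` as `σ = σ' * swap z t` with `σ' z = z`, so that
`z` is inserted into a cycle of `σ'` just before `t = σ⁻¹ z`. For `f x y = (x - y)⁻¹` the
three-term identity `f t z * f z u = f t u * (f t z + f z u)` shows that, for fixed `σ'`, an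
insertion point `t` with `σ' t ≠ t` contributes `(f z (σ' t) - f z t) * ∏ₓ f x (σ' x)`, which
telescopes to `0` when summed over `t`. Only the new `2`-cycles `(z t)` with `σ' t = t` survive:
`per A_S = ∑ₜ f z t * f t z * per A_{S ∖ {z, t}}`.
Splitting off the pair containing `z` gives the same recursion for the matching sum with weights
`f x y * f y x = -((x - y) ^ 2)⁻¹`, and induction on `h` concludes.
-/

open Finset Equiv

section

variable {α R : Type*} [CommRing R]

noncomputable def permanentOn (f : α → α → R) (s : Finset α) : R :=
  ∑ σ ∈ permsOfFinset s, ∏ x ∈ s, f x (σ x)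

theorem apply_mem_iff_of_mem_permsOfFinset {s : Finset α} {σ : Perm α}
    (hσ : σ ∈ permsOfFinset s) (x : α) : σ x ∈ s ↔ x ∈ s := by
  rw [mem_perms_of_finset_iff] at hσ
  by_cases hx : σ x = x
  · rw [hx]
  · exact ⟨fun _ => hσ hx, fun _ => hσ fun h => hx (σ.injective h)⟩

theorem permanent_restrict_eq_permanentOn (f : α → α → R) (s : Finset α) :
    permanent (Matrix.of fun x y : s => f x y) = permanentOn f s := by
  refine sum_nbij' (fun σ => Perm.ofSubtype σ)
    (fun σ => if h : ∀ x, σ x ∈ s ↔ x ∈ s then σ.subtypePerm h else 1) ?_ ?_ ?_ ?_ ?_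
  · intro σ _
    simp only [mem_perms_of_finset_iff]
    intro x hx
    by_contra hxs
    exact hx (Perm.ofSubtype_apply_of_not_mem σ hxs)
  · intro σ _
    simp
  · intro σ _
    simp only [Perm.ofSubtype_apply_mem_iff_mem, implies_true, dite_true]
    exact Perm.subtypePerm_ofSubtype σ
  · intro σ hσ
    have h := apply_mem_iff_of_mem_permsOfFinset hσ
    rw [dif_pos h]
    exact Perm.ofSubtype_subtypePerm h fun x hx => mem_perms_of_finset_iff.1 hσ hx
  · intro σ _
    rw [← prod_coe_sort s]
    simp

theorem permanentOn_empty (f : α → α → R) : permanentOn f ∅ = 1 := by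
  simp [permanentOn, card_perms_of_finset]

theorem sum_permsOfFinset_eq_sum_mul_swap {M : Type*} [AddCommMonoid M] {s : Finset α} {z : α}
    (hz : z ∈ s) (F : Perm α → M) :
    ∑ σ ∈ permsOfFinset s, F σ =
      ∑ σ ∈ permsOfFinset (s.erase z), ∑ t ∈ s, F (σ * swap z t) := by
  rw [← sum_product']
  refine sum_nbij' (fun σ => (σ * swap z (σ⁻¹ z), σ⁻¹ z)) (fun p => p.1 * swap z p.2)
    ?_ ?_ ?_ ?_ ?_
  · intro σ hσ
    have hw : σ⁻¹ z ∈ s := (apply_mem_iff_of_mem_permsOfFinset hσ _).1 (by simpa using hz)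
    simp only [mem_product, mem_perms_of_finset_iff, mem_erase] at hσ ⊢
    refine ⟨fun {x} hx => ⟨fun hxz => hx (by simp [hxz]), ?_⟩, hw⟩
    by_contra hxs
    have hxz : x ≠ z := fun h => hxs (h ▸ hz)
    have hxw : x ≠ σ⁻¹ z := fun h => hxs (h ▸ hw)
    rw [Perm.mul_apply, swap_apply_of_ne_of_ne hxz hxw] at hx
    exact hxs (hσ hx)
  · rintro ⟨σ, t⟩ h
    simp only [mem_product, mem_perms_of_finset_iff, mem_erase] at h ⊢
    intro x hx
    by_cases hxz : x = z
    · exact hxz ▸ hz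
    by_cases hxt : x = t
    · exact hxt ▸ h.2
    rw [Perm.mul_apply, swap_apply_of_ne_of_ne hxz hxt] at hx
    exact (h.1 hx).2
  · intro σ _
    simp [mul_assoc]
  · rintro ⟨σ, t⟩ h
    simp only [mem_product, mem_perms_of_finset_iff] at h
    have hσz : σ z = z := by
      by_contra h'
      exact notMem_erase z s (h.1 h')
    have hinv : (σ * swap z t)⁻¹ z = t := by
      rw [Perm.inv_eq_iff_eq]
      simp [hσz]
    simp only [hinv, mul_assoc, swap_mul_self, mul_one]
  · intro σ _
    simp [mul_assoc]

theorem filter_permsOfFinset_apply_eq_self (s : Finset α) (t : α) :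
    (permsOfFinset s).filter (fun σ => σ t = t) = permsOfFinset (s.erase t) := by
  ext σ
  simp only [mem_filter, mem_perms_of_finset_iff, mem_erase]
  refine ⟨fun ⟨hσ, ht⟩ x hx => ⟨fun h => hx (h ▸ ht), hσ hx⟩,
    fun hσ => ⟨fun hx => (hσ hx).2, ?_⟩⟩
  by_contra ht
  exact (hσ ht).1 rfl

theorem prod_apply_mul_swap (f : α → α → R) {s : Finset α} {σ : Perm α} {z t : α}
    (hz : z ∈ s) (ht : t ∈ s.erase z) (hσz : σ z = z) :
    ∏ x ∈ s, f x ((σ * swap z t) x) =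
      f z (σ t) * f t z * ∏ x ∈ (s.erase z).erase t, f x (σ x) := by
  rw [← mul_prod_erase s _ hz, ← mul_prod_erase (s.erase z) _ ht, ← mul_assoc]
  congr 1
  · simp [hσz]
  · refine prod_congr rfl fun x hx => ?_
    simp only [mem_erase] at hx
    rw [Perm.mul_apply, swap_apply_of_ne_of_ne hx.2.1 hx.1]

structure IsCauchyKernel (f : α → α → R) : Prop where
  apply_self : ∀ x, f x x = 0
  apply_swap : ∀ x y, f y x = -f x y
  cyclic : ∀ x y z, x ≠ y → y ≠ z → z ≠ x →
    f x y * f y z + f y z * f z x + f z x * f x y = 0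

theorem isCauchyKernel_inv_sub (K : Type*) [Field K] :
    IsCauchyKernel fun x y : K => (x - y)⁻¹ where
  apply_self x := by simp
  apply_swap x y := by rw [← neg_sub, inv_neg]
  cyclic x y z hxy hyz hzx := by
    have hxy' := sub_ne_zero.2 hxy
    have hyz' := sub_ne_zero.2 hyz
    have hzx' := sub_ne_zero.2 hzx
    field_simp
    ring

namespace IsCauchyKernel

variable {f : α → α → R}

theorem mul_eq_mul_add (hf : IsCauchyKernel f) {a b c : α} (hab : a ≠ b) (hbc : b ≠ c)
    (hca : c ≠ a) : f a b * f b c = f a c * (f a b + f b c) := by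
  linear_combination hf.cyclic a b c hab hbc hca - (f a b + f b c) * hf.apply_swap a c

theorem prod_apply_mul_swap_eq (hf : IsCauchyKernel f) {s : Finset α} {σ : Perm α} {z t : α}
    (hz : z ∈ s) (ht : t ∈ s.erase z) (hσz : σ z = z) :
    ∏ x ∈ s, f x ((σ * swap z t) x) =
      (f z (σ t) - f z t) * ∏ x ∈ s.erase z, f x (σ x) +
        if σ t = t then f z t * f t z * ∏ x ∈ (s.erase z).erase t, f x (σ x) else 0 := by
  rw [prod_apply_mul_swap f hz ht hσz]
  have htz : t ≠ z := ne_of_mem_erase ht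
  split_ifs with hσt
  · rw [hσt]
    ring
  · have hσtz : σ t ≠ z := fun h => htz (σ.injective (h.trans hσz.symm))
    rw [← mul_prod_erase (s.erase z) _ ht, mul_comm (f z (σ t)),
      hf.mul_eq_mul_add htz hσtz.symm hσt, hf.apply_swap z t]
    ring

theorem permanentOn_eq_sum_erase (hf : IsCauchyKernel f) {s : Finset α} {z : α} (hz : z ∈ s) :
    permanentOn f s =
      ∑ t ∈ s.erase z, f z t * f t z * permanentOn f ((s.erase z).erase t) := by
  have hfix : ∀ σ ∈ permsOfFinset (s.erase z), σ z = z := fun σ hσ => by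
    by_contra h
    exact notMem_erase z s (mem_perms_of_finset_iff.1 hσ h)
  have htelescope : ∀ σ ∈ permsOfFinset (s.erase z),
      ∑ t ∈ s.erase z, (f z (σ t) - f z t) = 0 := fun σ hσ => by
    rw [sum_sub_distrib, Perm.sum_comp σ _ (f z) fun x hx => mem_perms_of_finset_iff.1 hσ hx,
      sub_self]
  calc permanentOn f s
      = ∑ σ ∈ permsOfFinset (s.erase z), ∑ t ∈ s, ∏ x ∈ s, f x ((σ * swap z t) x) :=
        sum_permsOfFinset_eq_sum_mul_swap hz _
    _ = ∑ σ ∈ permsOfFinset (s.erase z), ∑ t ∈ s.erase z,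
          ∏ x ∈ s, f x ((σ * swap z t) x) := by
        refine sum_congr rfl fun σ hσ => (sum_erase s ?_).symm
        exact prod_eq_zero hz (by simp [hfix σ hσ, hf.apply_self])
    _ = ∑ σ ∈ permsOfFinset (s.erase z), ∑ t ∈ s.erase z,
          if σ t = t then f z t * f t z * ∏ x ∈ (s.erase z).erase t, f x (σ x) else 0 := by
        refine sum_congr rfl fun σ hσ => ?_
        rw [sum_congr rfl fun t ht => hf.prod_apply_mul_swap_eq hz ht (hfix σ hσ),
          sum_add_distrib, ← sum_mul, htelescope σ hσ, zero_mul, zero_add]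
    _ = ∑ t ∈ s.erase z, f z t * f t z * permanentOn f ((s.erase z).erase t) := by
        rw [sum_comm]
        refine sum_congr rfl fun t _ => ?_
        rw [← sum_filter, filter_permsOfFinset_apply_eq_self, permanentOn, mul_sum]

end IsCauchyKernel

noncomputable def perfectMatchings (s : Finset α) : Finset (Finset (Sym2 α)) :=
  s.sym2.powerset.filter (IsPerfectMatching s)

noncomputable def matchingSum (w : Sym2 α → R) (s : Finset α) : R :=
  ∑ P ∈ perfectMatchings s, ∏ e ∈ P, w e

theorem mem_perfectMatchings {s : Finset α} {P : Finset (Sym2 α)} :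
    P ∈ perfectMatchings s ↔
      (∀ e ∈ P, ¬e.IsDiag ∧ ∀ a ∈ e, a ∈ s) ∧ ∀ a ∈ s, ∃! e, e ∈ P ∧ a ∈ e := by
  simp only [perfectMatchings, IsPerfectMatching, mem_filter, mem_powerset, subset_iff,
    mem_sym2_iff]
  exact ⟨fun ⟨h₁, h₂, h₃⟩ => ⟨fun e he => ⟨h₂ e he, h₁ he⟩, h₃⟩,
    fun ⟨h₁, h₂⟩ => ⟨fun e he => (h₁ e he).2, fun e he => (h₁ e he).1, h₂⟩⟩

theorem mem_of_mem_perfectMatchings {s : Finset α} {P : Finset (Sym2 α)}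
    (hP : P ∈ perfectMatchings s) {e : Sym2 α} (he : e ∈ P) {a : α} (ha : a ∈ e) :
    a ∈ s :=
  ((mem_perfectMatchings.1 hP).1 e he).2 a ha

theorem insert_mem_perfectMatchings {s : Finset α} {z t : α} (hzs : z ∈ s)
    (ht : t ∈ s.erase z) {Q : Finset (Sym2 α)}
    (hQ : Q ∈ perfectMatchings ((s.erase z).erase t)) :
    insert s(z, t) Q ∈ perfectMatchings s := by
  obtain ⟨htz, hts⟩ := mem_erase.1 ht
  have hzQ : ∀ e ∈ Q, z ∉ e := fun e he hze =>
    notMem_erase z s (mem_of_mem_erase (mem_of_mem_perfectMatchings hQ he hze))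
  have htQ : ∀ e ∈ Q, t ∉ e := fun e he hte =>
    notMem_erase t _ (mem_of_mem_perfectMatchings hQ he hte)
  rw [mem_perfectMatchings] at hQ ⊢
  refine ⟨fun e he => ?_, fun a ha => ?_⟩
  · rcases mem_insert.1 he with rfl | he
    · refine ⟨Sym2.mk_isDiag_iff.not.2 (Ne.symm htz), fun a ha => ?_⟩
      rcases Sym2.mem_iff.1 ha with rfl | rfl
      exacts [hzs, hts]
    · exact ⟨(hQ.1 e he).1,
        fun a ha => mem_of_mem_erase (mem_of_mem_erase ((hQ.1 e he).2 a ha))⟩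
  by_cases hazt : a = z ∨ a = t
  · refine ⟨s(z, t), ⟨mem_insert_self _ _, by rcases hazt with rfl | rfl <;> simp⟩, ?_⟩
    rintro e ⟨he, hae⟩
    rcases mem_insert.1 he with rfl | heQ
    · rfl
    · rcases hazt with rfl | rfl
      exacts [absurd hae (hzQ e heQ), absurd hae (htQ e heQ)]
  · rw [not_or] at hazt
    obtain ⟨e, ⟨he, hae⟩, huniq⟩ := hQ.2 a (by simp [ha, hazt])
    refine ⟨e, ⟨mem_insert_of_mem he, hae⟩, fun e' ⟨he', hae'⟩ => ?_⟩
    rcases mem_insert.1 he' with rfl | he'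
    · rcases Sym2.mem_iff.1 hae' with h | h
      exacts [absurd h hazt.1, absurd h hazt.2]
    · exact huniq e' ⟨he', hae'⟩

theorem erase_mem_perfectMatchings {s : Finset α} {P : Finset (Sym2 α)}
    (hP : P ∈ perfectMatchings s) {z t : α} (he : s(z, t) ∈ P) :
    P.erase s(z, t) ∈ perfectMatchings ((s.erase z).erase t) := by
  have hzs := mem_of_mem_perfectMatchings hP he (Sym2.mem_mk_left z t)
  have hts := mem_of_mem_perfectMatchings hP he (Sym2.mem_mk_right z t)
  rw [mem_perfectMatchings] at hP ⊢
  have hedge : ∀ e ∈ P, ∀ a ∈ e, a = z ∨ a = t → e = s(z, t) := by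
    rintro e he' a hae (rfl | rfl)
    · exact (hP.2 a hzs).unique ⟨he', hae⟩ ⟨he, Sym2.mem_mk_left _ _⟩
    · exact (hP.2 a hts).unique ⟨he', hae⟩ ⟨he, Sym2.mem_mk_right _ _⟩
  refine ⟨fun e he' => ?_, fun a ha => ?_⟩
  · obtain ⟨hne, he'⟩ := mem_erase.1 he'
    refine ⟨(hP.1 e he').1, fun a hae => ?_⟩
    obtain ⟨haz, hat⟩ : a ≠ z ∧ a ≠ t := not_or.1 fun h => hne (hedge e he' a hae h)
    simp [haz, hat, (hP.1 e he').2 a hae]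
  · simp only [mem_erase] at ha
    obtain ⟨e, ⟨he', hae⟩, huniq⟩ := hP.2 a ha.2.2
    refine ⟨e, ⟨mem_erase.2 ⟨?_, he'⟩, hae⟩,
      fun e' ⟨he'', hae'⟩ => huniq e' ⟨mem_of_mem_erase he'', hae'⟩⟩
    rintro rfl
    rcases Sym2.mem_iff.1 hae with h | h
    exacts [ha.2.1 h, ha.1 h]

theorem matchingSum_empty (w : Sym2 α → R) : matchingSum w ∅ = 1 := by
  simp [matchingSum, perfectMatchings, filter_singleton, IsPerfectMatching]

theorem matchingSum_eq_sum_erase (w : Sym2 α → R) {s : Finset α} {z : α} (hz : z ∈ s) :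
    matchingSum w s = ∑ t ∈ s.erase z, w s(z, t) * matchingSum w ((s.erase z).erase t) := by
  have hzQ : ∀ t u, ∀ Q ∈ perfectMatchings ((s.erase z).erase t), s(z, u) ∉ Q :=
    fun t u Q hQ he => notMem_erase z s
      (mem_of_mem_erase (mem_of_mem_perfectMatchings hQ he (Sym2.mem_mk_left z u)))
  simp only [matchingSum, mul_sum]
  rw [sum_sigma']
  symm
  refine sum_nbij (fun p => insert s(z, p.1) p.2) ?_ ?_ ?_ ?_
  · rintro ⟨t, Q⟩ h
    simp only [mem_sigma] at h
    exact insert_mem_perfectMatchings hz h.1 h.2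
  · rintro ⟨t, Q⟩ h ⟨t', Q'⟩ h' heq
    simp only [mem_coe, mem_sigma] at h h' heq
    obtain rfl : t = t' := by
      have hmem : s(z, t) ∈ insert s(z, t') Q' := heq ▸ mem_insert_self _ _
      rcases mem_insert.1 hmem with h₁ | h₁
      · exact Sym2.congr_right.1 h₁
      · exact absurd h₁ (hzQ t' t Q' h'.2)
    rw [← erase_insert (hzQ t t Q h.2), heq, erase_insert (hzQ t t Q' h'.2)]
  · intro P hP
    rw [mem_coe] at hP
    obtain ⟨e, ⟨he, hze⟩, -⟩ := (mem_perfectMatchings.1 hP).2 z hz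
    obtain ⟨t, rfl⟩ := Sym2.mem_iff_exists.1 hze
    have htz : t ≠ z := fun h =>
      ((mem_perfectMatchings.1 hP).1 _ he).1 (Sym2.mk_isDiag_iff.2 h.symm)
    have ht : t ∈ s.erase z :=
      mem_erase.2 ⟨htz, mem_of_mem_perfectMatchings hP he (Sym2.mem_mk_right z t)⟩
    exact ⟨⟨t, P.erase s(z, t)⟩, mem_sigma.2 ⟨ht, erase_mem_perfectMatchings hP he⟩,
      insert_erase he⟩
  · rintro ⟨t, Q⟩ h
    simp only [mem_sigma] at h
    rw [prod_insert (hzQ t t Q h.2)]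

theorem card_erase_erase_of_card_eq {s : Finset α} {z t : α} (hz : z ∈ s) (ht : t ∈ s.erase z)
    {h : ℕ} (hs : #s = 2 * (h + 1)) : #((s.erase z).erase t) = 2 * h := by
  rw [card_erase_of_mem ht, card_erase_of_mem hz]
  omega

theorem matchingSum_const_mul (c : R) (w : Sym2 α → R) {s : Finset α} {h : ℕ}
    (hs : #s = 2 * h) : matchingSum (fun e => c * w e) s = c ^ h * matchingSum w s := by
  induction h generalizing s with
  | zero => simp [card_eq_zero.1 hs, matchingSum_empty]
  | succ h ih =>
    obtain ⟨z, hz⟩ := card_pos.1 (by omega : 0 < #s)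
    rw [matchingSum_eq_sum_erase _ hz, matchingSum_eq_sum_erase _ hz, mul_sum]
    refine sum_congr rfl fun t ht => ?_
    rw [ih (card_erase_erase_of_card_eq hz ht hs)]
    ring

theorem IsCauchyKernel.permanentOn_eq_matchingSum {f : α → α → R} (hf : IsCauchyKernel f)
    {s : Finset α} {h : ℕ} (hs : #s = 2 * h) :
    permanentOn f s =
      matchingSum (Sym2.lift ⟨fun x y => f x y * f y x, fun _ _ => mul_comm _ _⟩) s := by
  induction h generalizing s with
  | zero => simp [card_eq_zero.1 hs, permanentOn_empty, matchingSum_empty]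
  | succ h ih =>
    obtain ⟨z, hz⟩ := card_pos.1 (by omega : 0 < #s)
    rw [hf.permanentOn_eq_sum_erase hz, matchingSum_eq_sum_erase _ hz]
    refine sum_congr rfl fun t ht => ?_
    rw [ih (card_erase_erase_of_card_eq hz ht hs), Sym2.lift_mk]

end

/-- For `X` of size `2h` in a field of characteristic `≠ 2`, the permanent of the Cauchy
matrix `A_X` (zero diagonal, entries `1/(x-y)`) equals
`(-1)^h ∑_{matchings m of X} ∏_{{x,y} ∈ m} 1/(x-y)²`. -/
theorem stmt10 (K : Type*) [Field K]
    (X : Finset K) (h : ℕ) (hX : X.card = 2 * h) :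
    permanent (Matrix.of fun x y : X => if x = y then 0 else ((x : K) - (y : K))⁻¹)
      = (-1) ^ h *
        ∑ P ∈ X.sym2.powerset.filter (fun P => IsPerfectMatching X P),
          ∏ e ∈ P,
            Sym2.lift
              ⟨fun a b => ((a - b) ^ 2)⁻¹,
                fun a b => by simp only []; rw [show (a - b) ^ 2 = (b - a) ^ 2 by ring]⟩ e := by
  -- the zero diagonal is the junk value `(x - x)⁻¹ = 0⁻¹ = 0`
  have hdiag : (Matrix.of fun x y : X => if x = y then 0 else ((x : K) - (y : K))⁻¹) =
      Matrix.of fun x y : X => ((x : K) - (y : K))⁻¹ := by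
    ext x y
    simp only [Matrix.of_apply]
    split_ifs with hxy <;> simp [hxy]
  rw [hdiag, permanent_restrict_eq_permanentOn (fun x y : K => (x - y)⁻¹),
    (isCauchyKernel_inv_sub K).permanentOn_eq_matchingSum hX]
  show _ = (-1) ^ h * matchingSum (Sym2.lift _) X
  rw [← matchingSum_const_mul _ _ hX]
  congr 1
  funext e
  induction e using Sym2.ind with
  | _ x y =>
    simp only [Sym2.lift_mk]
    rw [← neg_sub x y, inv_neg, ← inv_pow]
    ring
end

section
/- Let X be a finite set of size N of pairwise distinct elements of a field K of characteristic ≠ 2, and suppose α ∈ K (or a quadratic extension, assume α ∈ K) satisfies α^2 = -1. Then for all u ∈ K, per(I_N + u A_X) = det(I_N + α u A_X), where A_X has zero diagonal and entries 1/(x-y) off diagonal. -/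
open scoped Classical
/-!
Both sides are weighted sums over permutations, with weight `1` for the permanent and `sign` for
the determinant. Expanding such a sum along the cycle through a point `t` writes it as
`∑_U (cycle sum over t ∪ U) · (sum over the remaining points)`, where a cycle through `t` and `U`
carries `c ^ #U` times the product of its entries, `c` being the weight of a transposition
(`1`, resp. `-1`). For the Cauchy kernel `(x_i - x_j)⁻¹`, Lagrange interpolation gives the
chain sums a closed form, and the cycle sum over `U` becomes the top coefficient of the
interpolant of `(X - x_t) ^ (#U - 2)` at the nodes `U`, hence vanishes once `#U ≥ 2`. Only
fixed points and transpositions survive, and on a transposition `u² = -(α u)²`.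
-/

namespace CauchyPermanent

open Finset Equiv

lemma apply_mem_of_forall_notMem_eq {ι : Type*} {σ : Perm ι} {S : Finset ι}
    (hσ : ∀ i ∉ S, σ i = i) {a : ι} (ha : a ∈ S) : σ a ∈ S := by
  by_contra h
  exact (σ.injective (hσ _ h) ▸ h) ha

section Chains

variable {ι R : Type*} [DecidableEq ι] [CommRing R]

lemma sum_mul_sum_powerset_erase (S : Finset ι) (g : ι → R) (h : ι → Finset ι → R)
    (P : Finset ι → R) :
    ∑ z ∈ S, g z * ∑ T ∈ (S.erase z).powerset, h z T * P (S.erase z \ T)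
      = ∑ U ∈ S.powerset, (∑ z ∈ U, g z * h z (U.erase z)) * P (S \ U) := by
  simp_rw [mul_sum, sum_mul]
  rw [sum_sigma', sum_sigma']
  refine sum_bij' (fun a _ => ⟨insert a.1 a.2, a.1⟩) (fun b _ => ⟨b.2, b.1.erase b.2⟩)
    ?_ ?_ ?_ ?_ ?_
  all_goals
    rintro ⟨a, b⟩ hab
    simp only [mem_sigma, mem_powerset] at hab
  · simp only [mem_sigma, mem_powerset]
    exact ⟨insert_subset hab.1 (hab.2.trans (erase_subset _ _)), mem_insert_self _ _⟩
  · simp only [mem_sigma, mem_powerset]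
    exact ⟨hab.1 hab.2, erase_subset_erase _ hab.1⟩
  · have : a ∉ b := fun h => by simpa using hab.2 h
    simp [erase_insert this]
  · simp [insert_erase hab.2]
  · have : a ∉ b := fun h => by simpa using hab.2 h
    simp only [erase_insert this, sdiff_insert, erase_sdiff_comm]
    ring

/-- The sum, over the orderings `z₁, …, z_k` of `T`, of `c ^ (k + 1) * w p z₁ * ⋯ * w z_k t`. -/
noncomputable def chainSum (c : R) (w : ι → ι → R) (p : ι) (T : Finset ι) (t : ι) : R :=
  c * ((if T = ∅ then w p t else 0) + ∑ z ∈ T.attach, w p z * chainSum c w z (T.erase z) t)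
termination_by T.card
decreasing_by exact card_erase_lt_of_mem z.2

lemma chainSum_eq (c : R) (w : ι → ι → R) (p : ι) (T : Finset ι) (t : ι) :
    chainSum c w p T t
      = c * ((if T = ∅ then w p t else 0) + ∑ z ∈ T, w p z * chainSum c w z (T.erase z) t) := by
  rw [chainSum, sum_attach T fun z => w p z * chainSum c w z (T.erase z) t]

lemma chainSum_empty (c : R) (w : ι → ι → R) (p t : ι) : chainSum c w p ∅ t = c * w p t := by
  rw [chainSum_eq, if_pos rfl, sum_empty, add_zero]

lemma chainSum_of_nonempty (c : R) (w : ι → ι → R) (p t : ι) {T : Finset ι} (hT : T.Nonempty) :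
    chainSum c w p T t = c * ∑ z ∈ T, w p z * chainSum c w z (T.erase z) t := by
  rw [chainSum_eq, if_neg hT.ne_empty, zero_add]

noncomputable def cycleSum (c : R) (w : ι → ι → R) (t : ι) (U : Finset ι) : R :=
  ∑ y ∈ U, w t y * chainSum c w y (U.erase y) t

lemma chainSum_eq_pow_mul_of_offDiag {w a : ι → ι → R} {d : R}
    (h : ∀ i j, i ≠ j → w i j = d * a i j) (c : R) {p t : ι} {T : Finset ι}
    (hp : p ∉ T) (ht : t ∉ T) (hpt : p ≠ t) :
    chainSum c w p T t = (c * d) ^ (#T + 1) * chainSum 1 a p T t := by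
  induction T using Finset.strongInduction generalizing p with
  | H T ih =>
    obtain rfl | hT := T.eq_empty_or_nonempty
    · rw [chainSum_empty, chainSum_empty, h p t hpt, card_empty, zero_add, pow_one]
      ring
    rw [chainSum_of_nonempty _ _ _ _ hT, chainSum_of_nonempty _ _ _ _ hT, one_mul, mul_sum,
      mul_sum]
    refine sum_congr rfl fun z hz => ?_
    have hzT : #T = #(T.erase z) + 1 := (card_erase_add_one hz).symm
    rw [h p z (fun h => hp (h ▸ hz)), ih _ (erase_ssubset hz) (notMem_erase z T)
      (fun h => ht (mem_of_mem_erase h)) (fun h => ht (h ▸ hz)), hzT]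
    ring

lemma cycleSum_eq_pow_mul_of_offDiag {w a : ι → ι → R} {d : R}
    (h : ∀ i j, i ≠ j → w i j = d * a i j) (c : R) {t : ι} {U : Finset ι} (ht : t ∉ U) :
    cycleSum c w t U = d * (c * d) ^ #U * cycleSum 1 a t U := by
  rw [cycleSum, cycleSum, mul_sum]
  refine sum_congr rfl fun y hy => ?_
  have hyt : y ≠ t := fun h => ht (h ▸ hy)
  rw [h t y hyt.symm, chainSum_eq_pow_mul_of_offDiag h c (notMem_erase y U)
    (fun h => ht (mem_of_mem_erase h)) hyt, card_erase_add_one hy]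
  ring

end Chains

section PermSums

variable {ι R : Type*} [Fintype ι] [DecidableEq ι] [CommRing R]

noncomputable def permSum (ε : Perm ι → R) (w : ι → ι → R) (s : Finset ι) : R :=
  ∑ σ : Perm ι, if ∀ i ∉ s, σ i = i then ε σ * ∏ i ∈ s, w i (σ i) else 0

noncomputable def pinnedPermSum (ε : Perm ι → R) (w : ι → ι → R) (s : Finset ι) (t y : ι) : R :=
  ∑ σ : Perm ι, if (∀ i ∉ insert t s, σ i = i) ∧ σ t = y then ε σ * ∏ i ∈ s, w i (σ i) else 0

variable {ε : Perm ι → R} {w : ι → ι → R} {c : R}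

lemma permSum_empty : permSum ε w ∅ = ε 1 := by
  rw [permSum, Fintype.sum_eq_single 1]
  · simp
  · intro σ hσ
    rw [if_neg fun h => hσ (Equiv.ext fun i => h i (notMem_empty i))]

lemma sum_mul_pinnedPermSum (g : ι → R) (s : Finset ι) (t : ι) :
    ∑ y ∈ insert t s, g y * pinnedPermSum ε w s t y
      = ∑ σ : Perm ι, if ∀ i ∉ insert t s, σ i = i
          then ε σ * g (σ t) * ∏ i ∈ s, w i (σ i) else 0 := by
  simp_rw [pinnedPermSum, mul_sum]
  rw [sum_comm]
  refine Fintype.sum_congr _ _ fun σ => ?_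
  split_ifs with hσ
  · rw [sum_eq_single (σ t)]
    · rw [if_pos ⟨hσ, rfl⟩]; ring
    · intro y _ hy
      rw [if_neg fun h => hy h.2.symm, mul_zero]
    · exact fun h => (h (apply_mem_of_forall_notMem_eq hσ (mem_insert_self t s))).elim
  · exact sum_eq_zero fun y _ => by rw [if_neg fun h => hσ h.1, mul_zero]

lemma permSum_insert_eq_sum_pinnedPermSum {s : Finset ι} {t : ι} (ht : t ∉ s) :
    permSum ε w (insert t s) = ∑ y ∈ insert t s, w t y * pinnedPermSum ε w s t y := by
  rw [sum_mul_pinnedPermSum, permSum]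
  refine Fintype.sum_congr _ _ fun σ => ?_
  rw [prod_insert ht, mul_assoc]

lemma pinnedPermSum_self {s : Finset ι} {t : ι} (ht : t ∉ s) :
    pinnedPermSum ε w s t t = permSum ε w s := by
  refine Fintype.sum_congr _ _ fun σ => if_congr ⟨fun h i hi => ?_, fun h => ⟨?_, h t ht⟩⟩ rfl rfl
  · by_cases hit : i = t
    · exact hit ▸ h.2
    · exact h.1 i (by simp [hit, hi])
  · intro i hi
    exact h i fun his => hi (mem_insert_of_mem his)

/- Right multiplication by the transposition `(t y)` turns the permutations with `σ t = y` into
those fixing `y`, and multiplies `ε` by `c`. -/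
lemma pinnedPermSum_eq_mul_sum_erase
    (hε : ∀ σ a b, a ≠ b → ε (σ * swap a b) = c * ε σ)
    {s : Finset ι} {t y : ι} (ht : t ∉ s) (hy : y ∈ s) :
    pinnedPermSum ε w s t y
      = c * ∑ z ∈ insert t (s.erase y), w y z * pinnedPermSum ε w (s.erase y) t z := by
  have hyt : y ≠ t := fun h => ht (h ▸ hy)
  rw [sum_mul_pinnedPermSum, mul_sum, pinnedPermSum]
  refine (Fintype.sum_equiv (Equiv.mulRight (swap t y)) _ _ fun τ => ?_).symm
  rw [Equiv.coe_mulRight]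
  have hσt : (τ * swap t y) t = τ y := by simp
  have hσy : (τ * swap t y) y = τ t := by simp
  have hσ : ∀ i, i ≠ t → i ≠ y → (τ * swap t y) i = τ i := fun i h₁ h₂ => by
    simp [swap_apply_of_ne_of_ne h₁ h₂]
  have hcond : ((∀ i ∉ insert t s, (τ * swap t y) i = i) ∧ (τ * swap t y) t = y)
      ↔ ∀ i ∉ insert t (s.erase y), τ i = i := by
    constructor
    · rintro ⟨h, hy'⟩ i hi
      rw [mem_insert, mem_erase, not_or, not_and_or, not_not] at hi
      rcases hi with ⟨hit, rfl | his⟩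
      · rwa [← hσt]
      · rw [← hσ i hit (fun h => his (h ▸ hy))]
        exact h i (by simp [hit, his])
    · intro h
      have hτy : τ y = y := h y (by simp [hyt])
      refine ⟨fun i hi => ?_, hσt.trans hτy⟩
      rw [mem_insert, not_or] at hi
      rw [hσ i hi.1 (fun h => hi.2 (h ▸ hy))]
      exact h i (by simp [hi.1, hi.2])
  split_ifs with hτ hσ' hσ'
  · rw [hε τ t y hyt.symm, ← mul_prod_erase s _ hy, hσy,
      prod_congr rfl fun i hi => congrArg (w i) (hσ i (fun h => ht (h ▸ mem_of_mem_erase hi))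
        (ne_of_mem_erase hi))]
    ring
  · exact (hσ' (hcond.mpr hτ)).elim
  · exact (hτ (hcond.mp hσ')).elim
  · rw [mul_zero]

lemma pinnedPermSum_eq_sum_chainSum (hε : ∀ σ a b, a ≠ b → ε (σ * swap a b) = c * ε σ)
    {s : Finset ι} {t y : ι} (ht : t ∉ s) (hy : y ∈ s) :
    pinnedPermSum ε w s t y
      = ∑ T ∈ (s.erase y).powerset, chainSum c w y T t * permSum ε w (s.erase y \ T) := by
  induction s using Finset.strongInduction generalizing y with
  | H s ih =>
    set S := s.erase y
    have htS : t ∉ S := fun h => ht (mem_of_mem_erase h)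
    have hrec : ∀ z ∈ S, pinnedPermSum ε w S t z
        = ∑ T ∈ (S.erase z).powerset, chainSum c w z T t * permSum ε w (S.erase z \ T) :=
      fun z hz => ih S (erase_ssubset hy) htS hz
    rw [pinnedPermSum_eq_mul_sum_erase hε ht hy, sum_insert htS, pinnedPermSum_self htS,
      sum_congr rfl fun z hz => by rw [hrec z hz], sum_mul_sum_powerset_erase]
    conv_rhs => enter [2, T]; rw [chainSum_eq]
    rw [sum_congr rfl fun T _ => mul_assoc _ _ _, ← mul_sum]
    congr 1
    simp only [add_mul, sum_add_distrib, ite_mul, zero_mul, sum_ite_eq', empty_mem_powerset,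
      if_true, sdiff_empty]

lemma permSum_insert
    (hε : ∀ σ a b, a ≠ b → ε (σ * swap a b) = c * ε σ)
    {s : Finset ι} {t : ι} (ht : t ∉ s) :
    permSum ε w (insert t s)
      = w t t * permSum ε w s + ∑ U ∈ s.powerset, cycleSum c w t U * permSum ε w (s \ U) := by
  rw [permSum_insert_eq_sum_pinnedPermSum ht, sum_insert ht, pinnedPermSum_self ht,
    sum_congr rfl fun y hy => by rw [pinnedPermSum_eq_sum_chainSum hε ht hy],
    sum_mul_sum_powerset_erase]
  rfl

lemma permSum_eq_of_cycleSum_eq {ε₁ ε₂ : Perm ι → R} {w₁ w₂ : ι → ι → R} {c₁ c₂ : R}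
    (hε₁ : ∀ σ a b, a ≠ b → ε₁ (σ * swap a b) = c₁ * ε₁ σ)
    (hε₂ : ∀ σ a b, a ≠ b → ε₂ (σ * swap a b) = c₂ * ε₂ σ) (h₁ : ε₁ 1 = ε₂ 1)
    (hdiag : ∀ i, w₁ i i = w₂ i i)
    (hcycle : ∀ t U, t ∉ U → U.Nonempty → cycleSum c₁ w₁ t U = cycleSum c₂ w₂ t U)
    (s : Finset ι) : permSum ε₁ w₁ s = permSum ε₂ w₂ s := by
  induction s using Finset.strongInduction with
  | H s ih =>
    obtain rfl | ⟨t, hts⟩ := s.eq_empty_or_nonempty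
    · rw [permSum_empty, permSum_empty, h₁]
    have ht : t ∉ s.erase t := notMem_erase t s
    rw [← insert_erase hts, permSum_insert hε₁ ht, permSum_insert hε₂ ht, hdiag,
      ih _ (erase_ssubset hts)]
    refine congrArg _ (sum_congr rfl fun U hU => ?_)
    rw [ih _ ((sdiff_subset).trans_ssubset (erase_ssubset hts))]
    obtain rfl | hUne := U.eq_empty_or_nonempty
    · simp [cycleSum]
    · rw [hcycle t U (fun h => ht (mem_powerset.mp hU h)) hUne]

lemma permSum_univ (ε : Perm ι → R) (w : ι → ι → R) :
    permSum ε w univ = ∑ σ : Perm ι, ε σ * ∏ i, w i (σ i) :=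
  Fintype.sum_congr _ _ fun _ => if_pos fun i hi => (hi (mem_univ i)).elim

end PermSums

section Cauchy

open Polynomial

variable {ι K : Type*} [DecidableEq ι] [Field K]

lemma eval_eq_sum_mul_prod {x : ι → K} {T : Finset ι} (hx : Set.InjOn x T) {P : K[X]}
    (hP : P.degree < #T) (z : K) :
    P.eval z = ∑ y ∈ T, P.eval (x y) * ∏ v ∈ T.erase y, (z - x v) / (x y - x v) := by
  conv_lhs => rw [Lagrange.eq_interpolate hx hP]
  simp only [Lagrange.interpolate_apply, eval_finsetSum, eval_mul, eval_C, Lagrange.basis,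
    eval_prod, Lagrange.basisDivisor]
  simp [div_eq_inv_mul]

def cauchyKernel (x : ι → K) (i j : ι) : K := (x i - x j)⁻¹

variable {x : ι → K}

/- The induction step is Lagrange interpolation of `(X - x t) ^ (#T - 1)` at the nodes `T`,
evaluated at `x p`. -/
lemma chainSum_cauchyKernel (hx : Function.Injective x) {p t : ι} {T : Finset ι} (hp : p ∉ T)
    (ht : t ∉ T) (hpt : p ≠ t) :
    chainSum 1 (cauchyKernel x) p T t
      = (x p - x t) ^ #T * (x p - x t)⁻¹ * ∏ y ∈ T, ((x p - x y)⁻¹ * (x y - x t)⁻¹) := by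
  induction T using Finset.strongInduction generalizing p with
  | H T ih =>
    obtain rfl | hT := T.eq_empty_or_nonempty
    · simp [chainSum_empty, cauchyKernel]
    obtain ⟨m, hm⟩ : ∃ m, #T = m + 1 := ⟨#T - 1, (Nat.sub_add_cancel hT.card_pos).symm⟩
    have hsub : ∀ {i j}, i ≠ j → x i - x j ≠ 0 := fun h => sub_ne_zero.mpr (hx.ne h)
    have hdeg : ((X - C (x t)) ^ m).degree < (#T : WithBot ℕ) := by
      rw [degree_pow, degree_X_sub_C, hm, nsmul_one]
      exact_mod_cast m.lt_succ_self
    have hinterp := eval_eq_sum_mul_prod hx.injOn hdeg (x p)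
    simp only [eval_pow, eval_sub, eval_X, eval_C] at hinterp
    rw [hm, pow_succ, mul_inv_cancel_right₀ (hsub hpt), hinterp, sum_mul,
      chainSum_of_nonempty _ _ _ _ hT, one_mul]
    refine sum_congr rfl fun y hy => ?_
    have hyt : y ≠ t := fun h => ht (h ▸ hy)
    have hcard : #(T.erase y) = m := by rw [card_erase_of_mem hy, hm, Nat.add_sub_cancel]
    rw [ih _ (erase_ssubset hy) (notMem_erase y T) (fun h => ht (mem_of_mem_erase h)) hyt, hcard,
      ← mul_prod_erase T _ hy, cauchyKernel]
    have hfactor : ∀ z ∈ T.erase y, (x p - x z) / (x y - x z) * ((x p - x z)⁻¹ * (x z - x t)⁻¹)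
        = (x y - x z)⁻¹ * (x z - x t)⁻¹ := fun z hz => by
      have := hsub (fun h : p = z => hp (h ▸ mem_of_mem_erase hz))
      field_simp
    rw [← prod_congr rfl hfactor, prod_mul_distrib]
    ring

lemma cycleSum_cauchyKernel_eq_zero (hx : Function.Injective x) {t : ι} {U : Finset ι}
    (ht : t ∉ U) (hU : 2 ≤ #U) : cycleSum 1 (cauchyKernel x) t U = 0 := by
  obtain ⟨n, hn⟩ : ∃ n, #U = n + 2 := ⟨#U - 2, (Nat.sub_add_cancel hU).symm⟩
  have hsub : ∀ {i j}, i ≠ j → x i - x j ≠ 0 := fun h => sub_ne_zero.mpr (hx.ne h)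
  have hdeg : ((X - C (x t)) ^ n).degree = (n : WithBot ℕ) := by
    rw [degree_pow, degree_X_sub_C, nsmul_one]
  have hcoeff := Lagrange.coeff_eq_sum (s := U) hx.injOn (P := (X - C (x t)) ^ n)
    (by rw [hdeg, hn]; exact_mod_cast (by omega : n < n + 2))
  rw [coeff_eq_zero_of_degree_lt (by rw [hdeg, hn]; exact_mod_cast (by omega : n < n + 2 - 1))]
    at hcoeff
  have hterm : ∀ y ∈ U, cauchyKernel x t y * chainSum 1 (cauchyKernel x) y (U.erase y) t
      = -(∏ z ∈ U, (x z - x t)⁻¹)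
          * (eval (x y) ((X - C (x t)) ^ n) / ∏ z ∈ U.erase y, (x y - x z)) := by
    intro y hy
    have hyt : y ≠ t := fun h => ht (h ▸ hy)
    have hcard : #(U.erase y) = n + 1 := by rw [card_erase_of_mem hy, hn]; rfl
    rw [chainSum_cauchyKernel hx (notMem_erase y U) (fun h => ht (mem_of_mem_erase h)) hyt,
      hcard, cauchyKernel, ← mul_prod_erase U _ hy, prod_mul_distrib, prod_inv_distrib,
      eval_pow, eval_sub, eval_X, eval_C]
    have h₁ := hsub hyt
    have h₂ := hsub hyt.symm
    field_simp
    ring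
  rw [cycleSum, sum_congr rfl hterm, ← mul_sum, ← hcoeff, mul_zero]

lemma cycleSum_scaled_cauchyKernel_eq (hx : Function.Injective x) {α : K} (hα : α ^ 2 = -1)
    (u : K) {t : ι} {U : Finset ι} (ht : t ∉ U) (hU : U.Nonempty) :
    cycleSum 1 (fun i j => if i = j then 1 else u * cauchyKernel x i j) t U
      = cycleSum (-1) (fun i j => if i = j then 1 else α * u * cauchyKernel x i j) t U := by
  rw [cycleSum_eq_pow_mul_of_offDiag (fun i j h => if_neg h) 1 ht,
    cycleSum_eq_pow_mul_of_offDiag (fun i j h => if_neg h) (-1) ht]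
  obtain hU1 | hU2 := (Nat.one_le_iff_ne_zero.mpr hU.card_ne_zero).eq_or_lt
  · rw [← hU1]
    linear_combination (u ^ 2 * cycleSum 1 (cauchyKernel x) t U) * hα
  · rw [cycleSum_cauchyKernel_eq_zero hx ht hU2, mul_zero, mul_zero]

end Cauchy

end CauchyPermanent

section

open CauchyPermanent Finset Equiv

variable {ι : Type*} [Fintype ι] [DecidableEq ι]

lemma permanent_eq_permSum {R : Type*} [CommRing R] (M : Matrix ι ι R) :
    permanent M = permSum (fun _ => 1) (fun i j => M i j) univ := by
  simp only [permSum_univ, permanent, one_mul]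
  congr!

lemma det_eq_permSum {R : Type*} [CommRing R] (M : Matrix ι ι R) :
    M.det = permSum (fun σ => ((Perm.sign σ : ℤ) : R)) (fun i j => M i j) univ := by
  rw [permSum_univ, ← Matrix.det_transpose, Matrix.det_apply']
  rfl

theorem permanent_one_add_smul_eq_det {K : Type*} [Field K] {x : ι → K}
    (hx : Function.Injective x) {α : K} (hα : α ^ 2 = -1) (u : K) :
    permanent (1 + u • Matrix.of fun i j => if i = j then 0 else cauchyKernel x i j)
      = (1 + (α * u) • Matrix.of fun i j => if i = j then 0 else cauchyKernel x i j).det := by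
  have hM : ∀ d : K, 1 + d • Matrix.of (fun i j => if i = j then 0 else cauchyKernel x i j)
      = Matrix.of fun i j => if i = j then 1 else d * cauchyKernel x i j := fun d => by
    ext i j
    by_cases h : i = j <;> simp [h]
  rw [hM, hM, permanent_eq_permSum, det_eq_permSum]
  refine permSum_eq_of_cycleSum_eq (c₁ := 1) (c₂ := -1) (fun _ _ _ _ => (one_mul 1).symm)
    (fun σ a b h => ?_) (by simp) (fun i => by simp) (fun t U ht hU => ?_) univ
  · rw [Perm.sign_mul, Perm.sign_swap h]
    push_cast
    ring
  · exact cycleSum_scaled_cauchyKernel_eq hx hα u ht hU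

end

theorem stmt11_general (K : Type*) [Field K]
    (X : Finset K) (α : K) (hα : α ^ 2 = -1) (u : K) :
    permanent
        (1 + u • Matrix.of fun x y : X => if x = y then 0 else ((x : K) - (y : K))⁻¹)
      = Matrix.det
          (1 + (α * u) • Matrix.of fun x y : X => if x = y then 0 else ((x : K) - (y : K))⁻¹) :=
  permanent_one_add_smul_eq_det (x := ((↑) : X → K)) Subtype.val_injective hα u

/-- If `α² = -1` in a field `K` of characteristic `≠ 2` and `X ⊆ K` is finite, then for all
`u`, `per(I + u A_X) = det(I + α u A_X)` where `A_X` is the Cauchy matrix of `X`. -/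
theorem stmt11 (K : Type*) [Field K] (h2 : (2 : K) ≠ 0)
    (X : Finset K) (α : K) (hα : α ^ 2 = -1) (u : K) :
    permanent
        (1 + u • Matrix.of fun x y : X => if x = y then 0 else ((x : K) - (y : K))⁻¹)
      = Matrix.det
          (1 + (α * u) • Matrix.of fun x y : X => if x = y then 0 else ((x : K) - (y : K))⁻¹) :=
  stmt11_general K X α hα u
end
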